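/- arXiv:1706.06366 — 4 statements merged into one kernel-verified Lean document; each statement's English description precedes it below -/
import Mathlib

section
/- Let d_C(x,y) = ∑_{δ∈Δ} w_δ · √(∑_{d∈δ} w_d |x_d − y_d|²) be the combined metric on ℝ^D (positive weights, domains partitioning D). Then every axis-parallel cuboid C = {x ∈ ℝ^D : ∀d, p⁻_d ≤ x_d ≤ p⁺_d} (with p⁻_d ≤ p⁺_d) is convex under d_C: for all x,z ∈ C and y ∈ ℝ^D, if d_C(x,y) + d_C(y,z) = d_C(x,z), then y ∈ C. -/
open Finset

/-- The combined distance: weighted Manhattan sum over domains of weighted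
Euclidean distances within each domain. -/
noncomputable def combinedDist {ι κ : Type*} [Fintype ι] [DecidableEq κ]
    (doms : Finset κ) (dom : ι → κ) (wδ : κ → ℝ) (wd : ι → ℝ)
    (x y : ι → ℝ) : ℝ :=
  ∑ δ ∈ doms, wδ δ *
    Real.sqrt (∑ d ∈ Finset.univ.filter (fun d => dom d = δ), wd d * |x d - y d| ^ 2)

/-! Each domain `δ` contributes the Euclidean distance between the vectors `(√w_d u_d)_{dom d = δ}`,
so `d_C` is a positively weighted sum of pseudometrics. Metric betweenness for `d_C` therefore
forces betweenness in every domain, which in a Euclidean space means lying on the segment.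
Reading off coordinate `d`, `y_d` lies between `x_d` and `z_d`, hence in `[p⁻_d, p⁺_d]`. -/

theorem dist_add_dist_eq_of_weighted_sum_eq {κ : Type*} [Fintype κ] {E : κ → Type*}
    [∀ k, PseudoMetricSpace (E k)] {w : κ → ℝ} (hw : ∀ k, 0 < w k) {a b c : ∀ k, E k}
    (h : ∑ k, w k * dist (a k) (b k) + ∑ k, w k * dist (b k) (c k)
      = ∑ k, w k * dist (a k) (c k)) (k : κ) :
    dist (a k) (b k) + dist (b k) (c k) = dist (a k) (c k) := by
  have hle : ∀ k ∈ univ, w k * dist (a k) (c k) ≤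
      w k * dist (a k) (b k) + w k * dist (b k) (c k) := fun k _ => by
    rw [← mul_add]; exact mul_le_mul_of_nonneg_left (dist_triangle _ _ _) (hw k).le
  have := (sum_eq_sum_iff_of_le hle).mp (by rw [sum_add_distrib, h]) k (mem_univ k)
  rw [← mul_add] at this
  exact (mul_left_cancel₀ (hw k).ne' this).symm

section DomainEmbedding

variable {ι κ : Type*} [DecidableEq κ]

noncomputable def domainEmbedding (dom : ι → κ) (wd : ι → ℝ) (δ : κ) :
    (ι → ℝ) →ₗ[ℝ] EuclideanSpace ℝ ι :=
  (WithLp.linearEquiv 2 ℝ (ι → ℝ)).symm.toLinearMap ∘ₗ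
    LinearMap.pi fun d => (if dom d = δ then √(wd d) else 0) • LinearMap.proj d

theorem domainEmbedding_apply (dom : ι → κ) (wd : ι → ℝ) (δ : κ) (u : ι → ℝ) (d : ι) :
    domainEmbedding dom wd δ u d = (if dom d = δ then √(wd d) else 0) * u d := rfl

theorem dist_domainEmbedding [Fintype ι] {wd : ι → ℝ} (hwd : ∀ d, 0 ≤ wd d) (dom : ι → κ)
    (δ : κ) (u v : ι → ℝ) :
    dist (domainEmbedding dom wd δ u) (domainEmbedding dom wd δ v) =
      √(∑ d ∈ univ.filter (fun d => dom d = δ), wd d * |u d - v d| ^ 2) := by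
  rw [EuclideanSpace.dist_eq, sum_filter]
  congr 1
  refine sum_congr rfl fun d _ => ?_
  rw [domainEmbedding_apply, domainEmbedding_apply, Real.dist_eq, ← mul_sub]
  split_ifs
  · rw [abs_mul, mul_pow, sq_abs, Real.sq_sqrt (hwd d)]
  · simp

theorem combinedDist_eq_sum_dist [Fintype ι] [Fintype κ] {wd : ι → ℝ} (hwd : ∀ d, 0 ≤ wd d)
    (dom : ι → κ) (wδ : κ → ℝ) (u v : ι → ℝ) :
    combinedDist univ dom wδ wd u v =
      ∑ δ, wδ δ * dist (domainEmbedding dom wd δ u) (domainEmbedding dom wd δ v) := by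
  simp only [combinedDist, dist_domainEmbedding hwd]

theorem wbtw_apply_of_wbtw_domainEmbedding {wd : ι → ℝ} (hwd : ∀ d, 0 < wd d) {dom : ι → κ}
    {x y z : ι → ℝ} {d : ι}
    (h : Wbtw ℝ (domainEmbedding dom wd (dom d) x) (domainEmbedding dom wd (dom d) y)
      (domainEmbedding dom wd (dom d) z)) :
    Wbtw ℝ (x d) (y d) (z d) := by
  have hs : √(wd d) ≠ 0 := (Real.sqrt_pos.mpr (hwd d)).ne'
  set readCoord := ((√(wd d))⁻¹ • EuclideanSpace.proj (𝕜 := ℝ) d).toLinearMap.toAffineMap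
  have readCoord_embedding (u : ι → ℝ) : readCoord (domainEmbedding dom wd (dom d) u) = u d := by
    simp [readCoord, domainEmbedding_apply, hs]
  simpa only [readCoord_embedding] using h.map readCoord

end DomainEmbedding

theorem cuboid_convex_under_combinedDist_general {ι κ : Type*} [Fintype ι] [Fintype κ]
    [DecidableEq κ] (dom : ι → κ) (wδ : κ → ℝ) (wd : ι → ℝ)
    (hwδ : ∀ δ, 0 < wδ δ) (hwd : ∀ d, 0 < wd d)
    (pm pp : ι → ℝ)
    (x z : ι → ℝ)
    (hx : ∀ d, pm d ≤ x d ∧ x d ≤ pp d)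
    (hz : ∀ d, pm d ≤ z d ∧ z d ≤ pp d)
    (y : ι → ℝ)
    (hbetween : combinedDist Finset.univ dom wδ wd x y
        + combinedDist Finset.univ dom wδ wd y z
        = combinedDist Finset.univ dom wδ wd x z) :
    ∀ d, pm d ≤ y d ∧ y d ≤ pp d := by
  intro d
  simp only [combinedDist_eq_sum_dist fun d => (hwd d).le] at hbetween
  have hdom := dist_add_dist_eq_iff.mp (dist_add_dist_eq_of_weighted_sum_eq hwδ hbetween (dom d))
  exact (convex_Icc (pm d) (pp d)).mem_of_wbtw (wbtw_apply_of_wbtw_domainEmbedding hwd hdom)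
    (hx d) (hz d)

/-- Every axis-parallel cuboid is convex under the combined metric `d_C`:
if `x, z` lie in the cuboid and `y` is metrically between them, then `y` lies
in the cuboid. -/
theorem cuboid_convex_under_combinedDist {ι κ : Type*} [Fintype ι] [Fintype κ]
    [DecidableEq κ] (dom : ι → κ) (wδ : κ → ℝ) (wd : ι → ℝ)
    (hwδ : ∀ δ, 0 < wδ δ) (hwd : ∀ d, 0 < wd d)
    (pm pp : ι → ℝ) (hpp : ∀ d, pm d ≤ pp d)
    (x z : ι → ℝ)
    (hx : ∀ d, pm d ≤ x d ∧ x d ≤ pp d)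
    (hz : ∀ d, pm d ≤ z d ∧ z d ≤ pp d)
    (y : ι → ℝ)
    (hbetween : combinedDist Finset.univ dom wδ wd x y
        + combinedDist Finset.univ dom wδ wd y z
        = combinedDist Finset.univ dom wδ wd x z) :
    ∀ d, pm d ≤ y d ∧ y d ≤ pp d :=
  cuboid_convex_under_combinedDist_general dom wδ wd hwδ hwd pm pp x z hx hz y hbetween
end

section
/- A point y in ℝ^D is metrically between x and z under the combined metric d_C (i.e., d_C(x,y) + d_C(y,z) = d_C(x,z)) if and only if for every domain δ, the restriction of y to the coordinates of δ lies on the line segment (in the λ-scaled sense, possibly with a different parameter per domain) between the restrictions of x and z; i.e., for each δ there exists t_δ ∈ [0,1] with y_d = (1 − t_δ)x_d + t_δ z_d for all d ∈ δ. -/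
open Finset

/-! Within a domain, `d_C` is the Euclidean distance after rescaling each coordinate by `√w_d`,
so strict convexity of Euclidean space turns equality in the triangle inequality into
membership of a segment. Across domains the triangle inequality holds termwise, so equality of
the positively weighted sums forces equality in every domain separately. -/

theorem EuclideanSpace.wbtw_iff {S : Type*} (x y z : EuclideanSpace ℝ S) :
    Wbtw ℝ x y z ↔ ∃ t ∈ Set.Icc (0 : ℝ) 1, ∀ i, y i = (1 - t) * x i + t * z i := by
  refine exists_congr fun t => and_congr_right fun _ => ?_
  rw [AffineMap.lineMap_apply_module, eq_comm, PiLp.ext_iff]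
  simp only [PiLp.add_apply, PiLp.smul_apply, smul_eq_mul]

section WeightedEuclidean

variable {ι : Type*} (S : Finset ι) (w : ι → ℝ)

noncomputable def weightedEmbedding (x : ι → ℝ) : EuclideanSpace ℝ S :=
  WithLp.toLp 2 fun d => √(w d.1) * x d.1

theorem dist_weightedEmbedding (hw : ∀ d ∈ S, 0 ≤ w d) (x y : ι → ℝ) :
    dist (weightedEmbedding S w x) (weightedEmbedding S w y)
      = √(∑ d ∈ S, w d * |x d - y d| ^ 2) := by
  rw [EuclideanSpace.dist_eq, ← Finset.sum_attach S]
  refine congrArg _ (Finset.sum_congr rfl fun d _ => ?_)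
  rw [weightedEmbedding, weightedEmbedding, PiLp.toLp_apply, PiLp.toLp_apply, Real.dist_eq,
    ← mul_sub, abs_mul, mul_pow, sq_abs, Real.sq_sqrt (hw d.1 d.2)]

theorem wbtw_weightedEmbedding_iff (hw : ∀ d ∈ S, 0 < w d) (x y z : ι → ℝ) :
    Wbtw ℝ (weightedEmbedding S w x) (weightedEmbedding S w y) (weightedEmbedding S w z) ↔
      ∃ t ∈ Set.Icc (0 : ℝ) 1, ∀ d ∈ S, y d = (1 - t) * x d + t * z d := by
  rw [EuclideanSpace.wbtw_iff]
  refine exists_congr fun t => and_congr_right fun _ => ?_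
  rw [Subtype.forall]
  refine forall₂_congr fun d hd => ?_
  have hsqrt : √(w d) ≠ 0 := (Real.sqrt_pos.2 (hw d hd)).ne'
  simp only [weightedEmbedding, PiLp.toLp_apply]
  rw [mul_left_comm _ (√(w d)), mul_left_comm t, ← mul_add, mul_right_inj' hsqrt]

theorem sqrt_weighted_sum_add_eq_iff (hw : ∀ d ∈ S, 0 < w d) (x y z : ι → ℝ) :
    √(∑ d ∈ S, w d * |x d - y d| ^ 2) + √(∑ d ∈ S, w d * |y d - z d| ^ 2)
        = √(∑ d ∈ S, w d * |x d - z d| ^ 2) ↔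
      ∃ t ∈ Set.Icc (0 : ℝ) 1, ∀ d ∈ S, y d = (1 - t) * x d + t * z d := by
  have hw' d hd : 0 ≤ w d := (hw d hd).le
  simp only [← dist_weightedEmbedding S w hw']
  rw [dist_add_dist_eq_iff, wbtw_weightedEmbedding_iff S w hw]

theorem sqrt_weighted_sum_le_add (hw : ∀ d ∈ S, 0 ≤ w d) (x y z : ι → ℝ) :
    √(∑ d ∈ S, w d * |x d - z d| ^ 2)
      ≤ √(∑ d ∈ S, w d * |x d - y d| ^ 2) + √(∑ d ∈ S, w d * |y d - z d| ^ 2) := by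
  simp only [← dist_weightedEmbedding S w hw]
  exact dist_triangle _ _ _

end WeightedEuclidean

/-- `y` is metrically between `x` and `z` under the combined metric `d_C` iff
for every domain `δ` there is a parameter `t_δ ∈ [0,1]` such that on the
coordinates of `δ`, `y` is the corresponding convex combination of `x` and `z`. -/
theorem combined_between_iff_segment_per_domain {ι κ : Type*} [Fintype ι] [Fintype κ]
    [DecidableEq κ] (dom : ι → κ) (wδ : κ → ℝ) (wd : ι → ℝ)
    (hwδ : ∀ δ, 0 < wδ δ) (hwd : ∀ d, 0 < wd d)
    (x y z : ι → ℝ) :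
    combinedDist Finset.univ dom wδ wd x y + combinedDist Finset.univ dom wδ wd y z
        = combinedDist Finset.univ dom wδ wd x z ↔
      ∀ δ : κ, ∃ t ∈ Set.Icc (0 : ℝ) 1,
        ∀ d, dom d = δ → y d = (1 - t) * x d + t * z d := by
  set S : κ → Finset ι := fun δ => Finset.univ.filter (fun d => dom d = δ)
  have htriangle : ∀ δ ∈ (Finset.univ : Finset κ),
      wδ δ * √(∑ d ∈ S δ, wd d * |x d - z d| ^ 2)
        ≤ wδ δ * √(∑ d ∈ S δ, wd d * |x d - y d| ^ 2)
          + wδ δ * √(∑ d ∈ S δ, wd d * |y d - z d| ^ 2) := fun δ _ => by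
    rw [← mul_add]
    exact mul_le_mul_of_nonneg_left
      (sqrt_weighted_sum_le_add _ wd (fun d _ => (hwd d).le) x y z) (hwδ δ).le
  rw [combinedDist, combinedDist, combinedDist, ← Finset.sum_add_distrib, eq_comm,
    Finset.sum_eq_sum_iff_of_le htriangle]
  refine forall_congr' fun δ => ?_
  rw [← mul_add, eq_comm, mul_right_inj' (hwδ δ).ne',
    sqrt_weighted_sum_add_eq_iff _ wd (fun d _ => hwd d)]
  simp only [S, Finset.mem_univ, Finset.mem_filter, true_and, true_imp_iff]
end

section
/- Let S ⊆ ℝ^D be a nonempty compact simple star-shaped set (a finite union of axis-parallel cuboids C_1,...,C_m with nonempty intersection P), let μ_0 ∈ (0,1], c > 0, and let d_C be the combined metric (weighted Manhattan over domains of weighted Euclidean within domains, positive weights). Define μ(x) = μ_0 · max_{y∈S} e^{−c·d_C(x,y)}. Then for every α ∈ (0, μ_0], the α-cut {x ∈ ℝ^D : μ(x) ≥ α} is star-shaped under d_C with respect to P, and for α > μ_0 the α-cut is empty. -/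
/-!
Inside one domain `δ` the combined distance is a weighted Euclidean norm of the `δ`-block of
coordinates. Equality in the triangle inequality `d(p,y) + d(y,z) = d(p,z)` therefore holds
blockwise, and by strict convexity of Euclidean norms the `δ`-block of `y - p` is `t δ` times
that of `z - p` for some `t δ ∈ [0,1]`. For `s` in a cuboid `Cᵢ ∋ p`, the blockwise homothety
`s' = p + t (s - p)` stays in `Cᵢ` and `d(y,s') ≤ d(z,s)`, so `μ y ≥ μ z`. Since `d ≥ 0`,
`μ ≤ μ₀`.
-/

open Finset

open Set

section BlockEmbedding

variable {ι κ : Type*} [DecidableEq κ]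

noncomputable def blockEmbed (dom : ι → κ) (wd : ι → ℝ) (δ : κ) :
    (ι → ℝ) →ₗ[ℝ] EuclideanSpace ℝ ι where
  toFun v := WithLp.toLp 2 fun d => if dom d = δ then √(wd d) * v d else 0
  map_add' v u := by
    ext d
    simp only [PiLp.add_apply, Pi.add_apply]
    split_ifs <;> ring
  map_smul' r v := by
    ext d
    simp only [PiLp.smul_apply, Pi.smul_apply, smul_eq_mul, RingHom.id_apply]
    split_ifs <;> ring

variable {dom : ι → κ} {wd : ι → ℝ}

theorem blockEmbed_blockwise_smul (δ : κ) (t : κ → ℝ) (v : ι → ℝ) :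
    blockEmbed dom wd δ (fun d => t (dom d) * v d) = t δ • blockEmbed dom wd δ v := by
  ext d
  simp only [blockEmbed, LinearMap.coe_mk, AddHom.coe_mk, PiLp.smul_apply, smul_eq_mul]
  split_ifs with h
  · rw [h]; ring
  · simp

variable [Fintype ι]

theorem norm_blockEmbed (hwd : ∀ d, 0 ≤ wd d) (δ : κ) (v : ι → ℝ) :
    ‖blockEmbed dom wd δ v‖ =
      √(∑ d ∈ Finset.univ.filter (fun d => dom d = δ), wd d * |v d| ^ 2) := by
  rw [EuclideanSpace.norm_eq, Finset.sum_filter]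
  congr 1
  refine Finset.sum_congr rfl fun d _ => ?_
  simp only [blockEmbed, LinearMap.coe_mk, AddHom.coe_mk]
  split_ifs
  · rw [Real.norm_eq_abs, sq_abs, mul_pow, Real.sq_sqrt (hwd d), sq_abs]
  · simp

variable [Fintype κ] {wδ : κ → ℝ}

theorem combinedDist_eq_sum_norm_blockEmbed (hwd : ∀ d, 0 ≤ wd d) (x y : ι → ℝ) :
    combinedDist Finset.univ dom wδ wd x y = ∑ δ, wδ δ * ‖blockEmbed dom wd δ (x - y)‖ := by
  simp only [combinedDist, norm_blockEmbed hwd, Pi.sub_apply]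

theorem combinedDist_nonneg (hwδ : ∀ δ, 0 ≤ wδ δ) (hwd : ∀ d, 0 ≤ wd d) (x y : ι → ℝ) :
    0 ≤ combinedDist Finset.univ dom wδ wd x y := by
  rw [combinedDist_eq_sum_norm_blockEmbed hwd]
  exact Finset.sum_nonneg fun δ _ => mul_nonneg (hwδ δ) (norm_nonneg _)

end BlockEmbedding

theorem sameRay_of_sum_norm_add_eq {κ E : Type*} [Fintype κ] [NormedAddCommGroup E]
    [NormedSpace ℝ E] [StrictConvexSpace ℝ E] {w : κ → ℝ} (hw : ∀ δ, 0 < w δ) {u v : κ → E}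
    (h : ∑ δ, w δ * ‖u δ + v δ‖ = ∑ δ, w δ * (‖u δ‖ + ‖v δ‖)) (δ : κ) :
    SameRay ℝ (u δ) (v δ) := by
  have hle : ∀ δ ∈ Finset.univ, w δ * ‖u δ + v δ‖ ≤ w δ * (‖u δ‖ + ‖v δ‖) :=
    fun δ _ => mul_le_mul_of_nonneg_left (norm_add_le _ _) (hw δ).le
  have hδ := (Finset.sum_eq_sum_iff_of_le hle).1 h δ (Finset.mem_univ δ)
  exact sameRay_iff_norm_add.2 (mul_left_cancel₀ (hw δ).ne' hδ)

section Betweenness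

variable {ι κ : Type*} [Fintype ι] [Fintype κ] [DecidableEq κ]
  {dom : ι → κ} {wδ : κ → ℝ} {wd : ι → ℝ}

theorem exists_blockEmbed_eq_smul_of_combinedDist_add_eq (hwδ : ∀ δ, 0 < wδ δ)
    (hwd : ∀ d, 0 ≤ wd d) {p y z : ι → ℝ}
    (h : combinedDist Finset.univ dom wδ wd p y + combinedDist Finset.univ dom wδ wd y z
      = combinedDist Finset.univ dom wδ wd p z) (δ : κ) :
    ∃ t ∈ Icc (0 : ℝ) 1, blockEmbed dom wd δ (y - p) = t • blockEmbed dom wd δ (z - p) := by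
  simp only [combinedDist_eq_sum_norm_blockEmbed hwd, ← Finset.sum_add_distrib, ← mul_add] at h
  set L := blockEmbed dom wd
  have hnorm_sub_rev : ∀ (a b : ι → ℝ) δ, ‖L δ (a - b)‖ = ‖L δ (b - a)‖ := fun a b δ => by
    rw [map_sub, map_sub, norm_sub_rev]
  have hsplit : ∀ δ, L δ (z - p) = L δ (y - p) + L δ (z - y) := fun δ => by
    rw [← map_add, sub_add_sub_cancel']
  have hray : SameRay ℝ (L δ (y - p)) (L δ (z - y)) := by
    refine sameRay_of_sum_norm_add_eq (u := fun δ => L δ (y - p)) (v := fun δ => L δ (z - y))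
      hwδ ?_ δ
    simp only [hnorm_sub_rev p, hnorm_sub_rev y z] at h
    simp only [← hsplit, h]
  obtain ⟨a, b, ha, hb, hab, hya, -⟩ := hray.exists_eq_smul_add
  exact ⟨a, ⟨ha, by linarith⟩, by rwa [← hsplit] at hya⟩

theorem combinedDist_blockwise_homothety_le (hwδ : ∀ δ, 0 ≤ wδ δ) (hwd : ∀ d, 0 ≤ wd d)
    {p y z : ι → ℝ} {t : κ → ℝ} (ht : ∀ δ, t δ ∈ Icc (0 : ℝ) 1)
    (hy : ∀ δ, blockEmbed dom wd δ (y - p) = t δ • blockEmbed dom wd δ (z - p)) (s : ι → ℝ) :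
    combinedDist Finset.univ dom wδ wd y (fun d => p d + t (dom d) * (s d - p d))
      ≤ combinedDist Finset.univ dom wδ wd z s := by
  rw [combinedDist_eq_sum_norm_blockEmbed hwd, combinedDist_eq_sum_norm_blockEmbed hwd]
  refine Finset.sum_le_sum fun δ _ => mul_le_mul_of_nonneg_left ?_ (hwδ δ)
  have hsub : y - (fun d => p d + t (dom d) * (s d - p d))
      = (y - p) - fun d => t (dom d) * (s - p) d := by
    ext d; simp only [Pi.sub_apply]; ring
  have hblock : blockEmbed dom wd δ (y - fun d => p d + t (dom d) * (s d - p d))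
      = t δ • blockEmbed dom wd δ (z - s) := by
    rw [hsub, map_sub, blockEmbed_blockwise_smul, hy, ← smul_sub, ← map_sub,
      sub_sub_sub_cancel_right]
  rw [hblock, norm_smul, Real.norm_of_nonneg (ht δ).1]
  exact mul_le_of_le_one_left (norm_nonneg _) (ht δ).2

end Betweenness

theorem add_mul_sub_mem_cuboid {ι : Type*} {lo hi p s τ : ι → ℝ}
    (hp : ∀ d, lo d ≤ p d ∧ p d ≤ hi d) (hs : ∀ d, lo d ≤ s d ∧ s d ≤ hi d)
    (hτ : ∀ d, τ d ∈ Icc (0 : ℝ) 1) (d : ι) :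
    lo d ≤ p d + τ d * (s d - p d) ∧ p d + τ d * (s d - p d) ≤ hi d :=
  (convex_Icc (lo d) (hi d)).add_smul_sub_mem (hp d) (hs d) (hτ d)

section ExpProximity

variable {α : Type*} {S : Set α} {D : α → α → ℝ} {c : ℝ}

theorem iSup_exp_neg_mul_le_one (hD : ∀ x y, 0 ≤ D x y) (hc : 0 ≤ c) (x : α) :
    ⨆ s : S, Real.exp (-c * D x s) ≤ 1 :=
  Real.iSup_le (fun s => Real.exp_le_one_iff.2 (by nlinarith [hD x s])) zero_le_one

theorem iSup_exp_neg_mul_le_of_forall_exists_le (hD : ∀ x y, 0 ≤ D x y) (hc : 0 ≤ c)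
    {y z : α} (h : ∀ s ∈ S, ∃ s' ∈ S, D y s' ≤ D z s) :
    ⨆ s : S, Real.exp (-c * D z s) ≤ ⨆ s : S, Real.exp (-c * D y s) := by
  have hbdd : BddAbove (range fun s : S => Real.exp (-c * D y s)) :=
    ⟨1, forall_mem_range.2 fun s => Real.exp_le_one_iff.2 (by nlinarith [hD y s])⟩
  refine Real.iSup_le (fun s => ?_) (Real.iSup_nonneg fun _ => (Real.exp_pos _).le)
  obtain ⟨s', hs', hle⟩ := h s s.2
  calc Real.exp (-c * D z s) ≤ Real.exp (-c * D y s') :=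
        Real.exp_le_exp.2 (mul_le_mul_of_nonpos_left hle (neg_nonpos.2 hc))
    _ ≤ _ := le_ciSup hbdd (⟨s', hs'⟩ : S)

end ExpProximity

theorem fuzzy_simple_star_shaped_alpha_cuts_general {ι κ : Type*} [Fintype ι] [Fintype κ]
    [DecidableEq κ] (dom : ι → κ) (wδ : κ → ℝ) (wd : ι → ℝ)
    (hwδ : ∀ δ, 0 < wδ δ) (hwd : ∀ d, 0 < wd d)
    {m : ℕ} (lo hi : Fin m → ι → ℝ)
    (C : Fin m → Set (ι → ℝ))
    (hC : ∀ i, C i = {x : ι → ℝ | ∀ d, lo i d ≤ x d ∧ x d ≤ hi i d})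
    (S : Set (ι → ℝ)) (hS : S = ⋃ i, C i)
    (μ0 c : ℝ) (hμ0 : μ0 ∈ Set.Ioc (0 : ℝ) 1) (hc : 0 < c)
    (μ : (ι → ℝ) → ℝ)
    (hμ : ∀ x, μ x = μ0 * ⨆ y : S, Real.exp (-c * combinedDist Finset.univ dom wδ wd x y)) :
    (∀ α ∈ Set.Ioc (0 : ℝ) μ0,
      ∀ p ∈ ⋂ i, C i, ∀ z ∈ {x : ι → ℝ | α ≤ μ x}, ∀ y : ι → ℝ,
        combinedDist Finset.univ dom wδ wd p y + combinedDist Finset.univ dom wδ wd y z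
            = combinedDist Finset.univ dom wδ wd p z →
          y ∈ {x : ι → ℝ | α ≤ μ x}) ∧
    (∀ α : ℝ, μ0 < α → {x : ι → ℝ | α ≤ μ x} = ∅) := by
  have hD0 := combinedDist_nonneg (dom := dom) (fun δ => (hwδ δ).le) (fun d => (hwd d).le)
  refine ⟨fun α _ p hp z hz y hy => ?_, fun α hα => ?_⟩
  · choose t ht hyt using
      exists_blockEmbed_eq_smul_of_combinedDist_add_eq hwδ (fun d => (hwd d).le) hy
    have hshrink : ∀ s ∈ S, ∃ s' ∈ S, combinedDist Finset.univ dom wδ wd y s'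
        ≤ combinedDist Finset.univ dom wδ wd z s := by
      intro s hs
      rw [hS, mem_iUnion] at hs
      obtain ⟨i, hsi⟩ := hs
      have hpi := mem_iInter.1 hp i
      rw [hC i] at hsi hpi
      refine ⟨_, hS ▸ mem_iUnion.2 ⟨i, ?_⟩,
        combinedDist_blockwise_homothety_le (fun δ => (hwδ δ).le) (fun d => (hwd d).le) ht hyt s⟩
      rw [hC i]
      exact add_mul_sub_mem_cuboid hpi hsi fun d => ht (dom d)
    calc α ≤ μ z := hz
      _ ≤ μ y := by
        rw [hμ, hμ]
        exact mul_le_mul_of_nonneg_left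
          (iSup_exp_neg_mul_le_of_forall_exists_le hD0 hc.le hshrink) hμ0.1.le
  · refine eq_empty_of_forall_notMem fun x hx => ?_
    have hμx : μ x ≤ μ0 := by
      rw [hμ]
      exact mul_le_of_le_one_right hμ0.1.le (iSup_exp_neg_mul_le_one hD0 hc.le x)
    exact (hα.trans_le hx).not_ge hμx

/-- Proposition 1: for a fuzzy simple star-shaped set with core
`S = ⋃ᵢ Cᵢ` (a finite union of nonempty axis-parallel cuboids with nonempty
intersection `P`) and membership `μ(x) = μ₀ · max_{y∈S} e^{−c·d_C(x,y)}`,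
every `α`-cut with `α ∈ (0, μ₀]` is star-shaped under `d_C` with respect to
`P`, and for `α > μ₀` the `α`-cut is empty. -/
theorem fuzzy_simple_star_shaped_alpha_cuts {ι κ : Type*} [Fintype ι] [Fintype κ]
    [DecidableEq κ] (dom : ι → κ) (wδ : κ → ℝ) (wd : ι → ℝ)
    (hwδ : ∀ δ, 0 < wδ δ) (hwd : ∀ d, 0 < wd d)
    {m : ℕ} (hm : 0 < m) (lo hi : Fin m → ι → ℝ) (hlohi : ∀ i d, lo i d ≤ hi i d)
    (C : Fin m → Set (ι → ℝ))
    (hC : ∀ i, C i = {x : ι → ℝ | ∀ d, lo i d ≤ x d ∧ x d ≤ hi i d})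
    (hP : (⋂ i, C i).Nonempty)
    (S : Set (ι → ℝ)) (hS : S = ⋃ i, C i)
    (μ0 c : ℝ) (hμ0 : μ0 ∈ Set.Ioc (0 : ℝ) 1) (hc : 0 < c)
    (μ : (ι → ℝ) → ℝ)
    (hμ : ∀ x, μ x = μ0 * ⨆ y : S, Real.exp (-c * combinedDist Finset.univ dom wδ wd x y)) :
    (∀ α ∈ Set.Ioc (0 : ℝ) μ0,
      ∀ p ∈ ⋂ i, C i, ∀ z ∈ {x : ι → ℝ | α ≤ μ x}, ∀ y : ι → ℝ,
        combinedDist Finset.univ dom wδ wd p y + combinedDist Finset.univ dom wδ wd y z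
            = combinedDist Finset.univ dom wδ wd p z →
          y ∈ {x : ι → ℝ | α ≤ μ x}) ∧
    (∀ α : ℝ, μ0 < α → {x : ι → ℝ | α ≤ μ x} = ∅) :=
  fuzzy_simple_star_shaped_alpha_cuts_general dom wδ wd hwδ hwd lo hi C hC S hS μ0 c hμ0 hc μ hμ
end

section
/- Let S̃ = ⟨S, μ_0, c, W⟩ be a fuzzy simple star-shaped set on domains Δ_S with membership μ(x) = μ_0 max_{y∈S} e^{−c·d_C^{Δ_S}(x,y,W)}. Let Δ_1, Δ_2 partition Δ_S with ∑_{δ∈Δ_1} w_δ = |Δ_1| and ∑_{δ∈Δ_2} w_δ = |Δ_2|. Let S̃_1, S̃_2 be the projections of S̃ onto Δ_1, Δ_2 (with the same μ_0 and c, and renormalized domain weights as defined), and let S̃' be their intersection (membership min(μ_1, μ_2) where μ_i uses the projected crisp set, metric d_C^{Δ_i}). Then μ(x) ≤ μ_{S̃'}(x) for all x, i.e., S̃ ⊆ S̃'. -/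
open Finset

/-- Proposition 3: let `S̃ = ⟨S, μ₀, c, W⟩` be a fuzzy simple star-shaped set
on the domains `Δ_S = Δ₁ ∪ Δ₂` (a disjoint partition) with
`∑_{δ∈Δ₁} w_δ = |Δ₁|` and `∑_{δ∈Δ₂} w_δ = |Δ₂|`. Then the membership of `S̃`
is pointwise at most the membership of the intersection (pointwise minimum) of
its projections onto `Δ₁` and `Δ₂` (which keep `μ₀` and `c`, with unchanged
weights by the hypothesis); i.e. `S̃ ⊆ S̃'`. Here the membership of the
projection onto `Δᵢ` at `x` is `μ₀ · max_{y∈S} e^{−c·d_C^{Δᵢ}(x,y)}`, since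
`d_C^{Δᵢ}` only depends on the coordinates of the domains in `Δᵢ`. -/
theorem fuzzy_projection_intersection {ι κ : Type*} [Fintype ι] [Fintype κ]
    [DecidableEq κ] (dom : ι → κ) (wδ : κ → ℝ) (wd : ι → ℝ)
    (hwδ : ∀ δ, 0 < wδ δ) (hwd : ∀ d, 0 < wd d)
    (hdim : ∀ δ : κ, ∑ d ∈ Finset.univ.filter (fun d => dom d = δ), wd d = 1)
    (Δ1 Δ2 : Finset κ) (hdisj : Disjoint Δ1 Δ2) (hcover : Δ1 ∪ Δ2 = Finset.univ)
    (hw1 : ∑ δ ∈ Δ1, wδ δ = (Δ1.card : ℝ)) (hw2 : ∑ δ ∈ Δ2, wδ δ = (Δ2.card : ℝ))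
    {m : ℕ} (hm : 0 < m) (lo hi : Fin m → ι → ℝ) (hlohi : ∀ i d, lo i d ≤ hi i d)
    (C : Fin m → Set (ι → ℝ))
    (hC : ∀ i, C i = {x : ι → ℝ | ∀ d, lo i d ≤ x d ∧ x d ≤ hi i d})
    (hP : (⋂ i, C i).Nonempty)
    (S : Set (ι → ℝ)) (hS : S = ⋃ i, C i)
    (μ0 c : ℝ) (hμ0 : μ0 ∈ Set.Ioc (0 : ℝ) 1) (hc : 0 < c) :
    ∀ x : ι → ℝ,
      μ0 * ⨆ y : S, Real.exp (-c * combinedDist (Δ1 ∪ Δ2) dom wδ wd x y) ≤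
        min (μ0 * ⨆ y : S, Real.exp (-c * combinedDist Δ1 dom wδ wd x y))
            (μ0 * ⨆ y : S, Real.exp (-c * combinedDist Δ2 dom wδ wd x y)) := by
  intro x
  -- nonnegativity of combinedDist
  have hnn : ∀ (doms : Finset κ) (y : ι → ℝ), 0 ≤ combinedDist doms dom wδ wd x y := by
    intro doms y
    apply Finset.sum_nonneg
    intro δ _
    exact mul_nonneg (le_of_lt (hwδ δ)) (Real.sqrt_nonneg _)
  -- S is nonempty
  have hSne : S.Nonempty := by
    obtain ⟨p, hp⟩ := hP
    refine ⟨p, ?_⟩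
    rw [hS]
    exact Set.mem_iUnion.2 ⟨⟨0, hm⟩, Set.mem_iInter.1 hp _⟩
  haveI : Nonempty S := hSne.to_subtype
  -- boundedness
  have hbdd : ∀ (doms : Finset κ),
      BddAbove (Set.range fun y : S => Real.exp (-c * combinedDist doms dom wδ wd x y)) := by
    intro doms
    refine ⟨1, ?_⟩
    rintro _ ⟨y, rfl⟩
    apply Real.exp_le_one_iff.2
    have := hnn doms y
    nlinarith
  -- sum split
  have hsplit : ∀ y : ι → ℝ, combinedDist (Δ1 ∪ Δ2) dom wδ wd x y
      = combinedDist Δ1 dom wδ wd x y + combinedDist Δ2 dom wδ wd x y := by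
    intro y
    unfold combinedDist
    exact Finset.sum_union hdisj
  have hμ0nn : 0 ≤ μ0 := le_of_lt hμ0.1
  have key : ∀ (doms : Finset κ), (∀ y : ι → ℝ, combinedDist doms dom wδ wd x y
        ≤ combinedDist (Δ1 ∪ Δ2) dom wδ wd x y) →
      (⨆ y : S, Real.exp (-c * combinedDist (Δ1 ∪ Δ2) dom wδ wd x y)) ≤
      (⨆ y : S, Real.exp (-c * combinedDist doms dom wδ wd x y)) := by
    intro doms hle
    apply ciSup_mono (hbdd doms)
    intro y
    apply Real.exp_le_exp.2
    have := hle y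
    nlinarith
  apply le_min
  · exact mul_le_mul_of_nonneg_left
      (key Δ1 (fun y => by rw [hsplit y]; linarith [hnn Δ2 y])) hμ0nn
  · exact mul_le_mul_of_nonneg_left
      (key Δ2 (fun y => by rw [hsplit y]; linarith [hnn Δ1 y])) hμ0nn
end
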